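/- The set of q×r real matrices with orthonormal columns, equipped with the metric d(A1, A2) = ‖A1A1^T − A2A2^T‖_op, together with the unit Frobenius ball of s×r matrices, yields via (D, A) ↦ D A^T a surjection onto the set of s×q matrices of rank ≤ r and Frobenius norm ≤ 1, and this map is 2-Lipschitz in the sense that ‖D1A1^T − D2A2^T‖_F ≤ d(A1,A2) + ‖D1A1^TA2 − D2‖_F ≤ d(A1,A2) + ‖D1 − D2‖_F + ‖D1‖_F·σ_max(A1^TA2 − I_r). -/

import Mathlib

open scoped BigOperators
open Matrix

/-- Frobenius norm of a real matrix. -/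
noncomputable def frob {a b : ℕ} (M : Matrix (Fin a) (Fin b) ℝ) : ℝ :=
  Real.sqrt (∑ i, ∑ j, (M i j) ^ 2)

/-- Euclidean norm of the `j`-th row of a matrix. -/
noncomputable def rnorm {a b : ℕ} (M : Matrix (Fin a) (Fin b) ℝ) (j : Fin a) : ℝ :=
  Real.sqrt (∑ k, (M j k) ^ 2)

/-- Operator (spectral) norm of a real matrix: the largest singular value. -/
noncomputable def opN {a b : ℕ} (M : Matrix (Fin a) (Fin b) ℝ) : ℝ :=
  sSup {c : ℝ | ∃ v : Fin b → ℝ, (∑ j, (v j) ^ 2) ≤ 1 ∧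
    c = Real.sqrt (∑ i, (M.mulVec v i) ^ 2)}

/-!
Right multiplication by `Aᵀ` with `AᵀA = 1` preserves the Frobenius norm, and
`‖XB‖_F ≤ ‖X‖_F ‖B‖_op`. Hence the splitting
`D₁A₁ᵀ - D₂A₂ᵀ = D₁A₁ᵀ (A₁A₁ᵀ - A₂A₂ᵀ) + (D₁A₁ᵀA₂ - D₂) A₂ᵀ` gives the first bound, and
`D₁A₁ᵀA₂ - D₂ = (D₁ - D₂) + D₁ (A₁ᵀA₂ - 1)` the second. For surjectivity, the row space of a
matrix `C` of rank at most `r ≤ q` lies in an `r`-dimensional subspace; if the columns of `A` form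
an orthonormal basis of it, then `AAᵀ` fixes the rows of `C`, so `C = (CA)Aᵀ` with
`‖CA‖_F = ‖C‖_F`.
-/

open Module WithLp

lemma frob_nonneg {a b : ℕ} (M : Matrix (Fin a) (Fin b) ℝ) : 0 ≤ frob M :=
  Real.sqrt_nonneg _

lemma frob_eq_sqrt_sum_norm_row_sq {a b : ℕ} (M : Matrix (Fin a) (Fin b) ℝ) :
    frob M = √(∑ i, ‖toLp 2 (M i)‖ ^ 2) := by
  simp [frob, EuclideanSpace.real_norm_sq_eq]

lemma frob_eq_norm {a b : ℕ} (M : Matrix (Fin a) (Fin b) ℝ) :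
    frob M =
      ‖(toLp 2 fun i => toLp 2 (M i) : PiLp 2 fun _ : Fin a => EuclideanSpace ℝ (Fin b))‖ := by
  rw [PiLp.norm_eq_of_L2, frob_eq_sqrt_sum_norm_row_sq]

lemma frob_add_le {a b : ℕ} (M N : Matrix (Fin a) (Fin b) ℝ) :
    frob (M + N) ≤ frob M + frob N := by
  have hrows :
      (toLp 2 fun i => toLp 2 ((M + N) i) : PiLp 2 fun _ : Fin a => EuclideanSpace ℝ (Fin b)) =
        (toLp 2 fun i => toLp 2 (M i)) + toLp 2 fun i => toLp 2 (N i) := rfl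
  rw [frob_eq_norm, frob_eq_norm, frob_eq_norm, hrows]
  exact norm_add_le _ _

lemma frob_sq_eq_trace {a b : ℕ} (M : Matrix (Fin a) (Fin b) ℝ) :
    frob M ^ 2 = (M * Mᵀ).trace := by
  rw [frob, Real.sq_sqrt (by positivity)]
  simp [trace, mul_apply, sq]

lemma frob_mul_transpose_of_transpose_mul_self_eq_one {a b c : ℕ} (X : Matrix (Fin a) (Fin c) ℝ)
    {A : Matrix (Fin b) (Fin c) ℝ} (hA : Aᵀ * A = 1) : frob (X * Aᵀ) = frob X := by
  refine (sq_eq_sq₀ (frob_nonneg _) (frob_nonneg _)).1 ?_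
  rw [frob_sq_eq_trace, frob_sq_eq_trace, transpose_mul, transpose_transpose, Matrix.mul_assoc,
    ← Matrix.mul_assoc Aᵀ, hA, Matrix.one_mul]

lemma frob_le_mul_of_norm_row_le {a b c : ℕ} {M : Matrix (Fin a) (Fin b) ℝ}
    {N : Matrix (Fin a) (Fin c) ℝ} {k : ℝ} (hk : 0 ≤ k)
    (h : ∀ i, ‖toLp 2 (M i)‖ ≤ k * ‖toLp 2 (N i)‖) : frob M ≤ k * frob N := by
  rw [frob_eq_sqrt_sum_norm_row_sq, frob_eq_sqrt_sum_norm_row_sq, ← Real.sqrt_sq hk,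
    ← Real.sqrt_mul (sq_nonneg k), Finset.mul_sum]
  gcongr with i
  rw [← mul_pow]
  exact pow_le_pow_left₀ (norm_nonneg _) (h i) 2

section L2Operator

open scoped Matrix.Norms.L2Operator

lemma opN_eq_l2_opNorm {a b : ℕ} (M : Matrix (Fin a) (Fin b) ℝ) : opN M = ‖M‖ := by
  rw [l2_opNorm_def, ← ContinuousLinearMap.sSup_unitClosedBall_eq_norm, opN]
  congr 1
  ext c
  constructor
  · rintro ⟨v, hv, rfl⟩
    refine ⟨toLp 2 v, ?_, ?_⟩
    · simpa [EuclideanSpace.norm_eq] using hv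
    · simp [EuclideanSpace.norm_eq]
  · rintro ⟨x, hx, rfl⟩
    refine ⟨ofLp x, ?_, ?_⟩
    · simpa [EuclideanSpace.norm_eq] using hx
    · simp [EuclideanSpace.norm_eq]

lemma opN_nonneg {a b : ℕ} (M : Matrix (Fin a) (Fin b) ℝ) : 0 ≤ opN M :=
  opN_eq_l2_opNorm M ▸ norm_nonneg _

lemma opN_transpose {a b : ℕ} (M : Matrix (Fin a) (Fin b) ℝ) : opN Mᵀ = opN M := by
  rw [opN_eq_l2_opNorm, opN_eq_l2_opNorm, ← conjTranspose_eq_transpose_of_trivial,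
    l2_opNorm_conjTranspose]

lemma norm_mulVec_le_opN_mul {a b : ℕ} (M : Matrix (Fin a) (Fin b) ℝ) (v : Fin b → ℝ) :
    ‖toLp 2 (M *ᵥ v)‖ ≤ opN M * ‖toLp 2 v‖ :=
  opN_eq_l2_opNorm M ▸ l2_opNorm_mulVec M (toLp 2 v)

end L2Operator

lemma frob_mul_le {a b c : ℕ} (M : Matrix (Fin a) (Fin b) ℝ) (B : Matrix (Fin b) (Fin c) ℝ) :
    frob (M * B) ≤ frob M * opN B := by
  rw [mul_comm]
  refine frob_le_mul_of_norm_row_le (opN_nonneg B) fun i => ?_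
  have hrow : (M * B) i = Bᵀ *ᵥ M i := by
    rw [mulVec_transpose]; rfl
  rw [hrow, ← opN_transpose B]
  exact norm_mulVec_le_opN_mul _ _

theorem Submodule.exists_le_finrank_eq {K V : Type*} [DivisionRing K] [AddCommGroup V]
    [Module K V] [FiniteDimensional K V] (W : Submodule K V) {n : ℕ}
    (hWn : finrank K W ≤ n) (hn : n ≤ finrank K V) :
    ∃ U : Submodule K V, W ≤ U ∧ finrank K U = n := by
  induction n, hWn using Nat.le_induction with
  | base => exact ⟨W, le_rfl, rfl⟩
  | succ n _ ih =>
    obtain ⟨U, hWU, hU⟩ := ih (Nat.le_of_succ_le hn)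
    obtain ⟨v, hv⟩ : ∃ v, v ∉ U := by
      by_contra! h
      have : U = ⊤ := eq_top_iff.2 fun v _ => h v
      rw [this, finrank_top] at hU
      omega
    exact ⟨U ⊔ K ∙ v, hWU.trans le_sup_left, by rw [finrank_sup_span_singleton hv, hU]⟩

lemma exists_transpose_mul_self_eq_one_vecMul_eq {q r : ℕ}
    (W : Submodule ℝ (EuclideanSpace ℝ (Fin q))) (hW : finrank ℝ W ≤ r) (hrq : r ≤ q) :
    ∃ A : Matrix (Fin q) (Fin r) ℝ, Aᵀ * A = 1 ∧ ∀ x ∈ W, ofLp x ᵥ* (A * Aᵀ) = ofLp x := by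
  obtain ⟨U, hWU, hU⟩ := W.exists_le_finrank_eq hW (by simpa using hrq)
  let b : OrthonormalBasis (Fin r) ℝ U := (stdOrthonormalBasis ℝ U).reindex (finCongr hU)
  have hinner : ∀ (l : Fin r) (x : EuclideanSpace ℝ (Fin q)),
      ∑ t, x t * (b l : EuclideanSpace ℝ (Fin q)) t =
        inner ℝ (b l : EuclideanSpace ℝ (Fin q)) x := by
    intro l x
    simp [PiLp.inner_apply]
  refine ⟨Matrix.of fun t l => (b l : EuclideanSpace ℝ (Fin q)) t, ?_, fun x hx => ?_⟩
  · ext l m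
    simp only [mul_apply, transpose_apply, of_apply, one_apply]
    rw [hinner, real_inner_comm, ← Submodule.coe_inner, b.inner_eq_ite]
  · have hrepr := congrArg (fun y : U => ofLp (y : EuclideanSpace ℝ (Fin q)))
      (b.sum_repr' ⟨x, hWU hx⟩)
    simp only [Submodule.coe_sum, Submodule.coe_smul] at hrepr
    rw [← vecMul_vecMul]
    ext t
    conv_rhs => rw [← hrepr]
    simp [vecMul, dotProduct, hinner]

lemma exists_transpose_mul_self_eq_one_mul_mul_transpose_eq {s q r : ℕ}
    (C : Matrix (Fin s) (Fin q) ℝ) (hC : C.rank ≤ r) (hrq : r ≤ q) :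
    ∃ A : Matrix (Fin q) (Fin r) ℝ, Aᵀ * A = 1 ∧ C * A * Aᵀ = C := by
  let W := (Submodule.span ℝ (Set.range C.row)).map
    (WithLp.linearEquiv 2 ℝ (Fin q → ℝ)).symm.toLinearMap
  have hW : finrank ℝ W ≤ r := by
    rwa [LinearEquiv.finrank_map_eq, ← rank_eq_finrank_span_row]
  obtain ⟨A, hA, hfix⟩ := exists_transpose_mul_self_eq_one_vecMul_eq W hW hrq
  refine ⟨A, hA, ?_⟩
  ext i j
  have hrow : toLp 2 (C i) ∈ W :=
    Submodule.mem_map_of_mem (Submodule.subset_span ⟨i, rfl⟩)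
  rw [Matrix.mul_assoc]
  exact congrFun (hfix _ hrow) j

lemma setOf_mul_transpose_eq_setOf_rank_le {s q r : ℕ} (hrq : r ≤ q) :
    {C : Matrix (Fin s) (Fin q) ℝ |
        ∃ (D : Matrix (Fin s) (Fin r) ℝ) (A : Matrix (Fin q) (Fin r) ℝ),
          frob D ≤ 1 ∧ Aᵀ * A = 1 ∧ C = D * Aᵀ} =
      {C : Matrix (Fin s) (Fin q) ℝ | C.rank ≤ r ∧ frob C ≤ 1} := by
  ext C
  constructor
  · rintro ⟨D, A, hD, hA, rfl⟩
    exact ⟨(rank_mul_le_left D Aᵀ).trans (rank_le_width D),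
      (frob_mul_transpose_of_transpose_mul_self_eq_one D hA).trans_le hD⟩
  · rintro ⟨hrank, hfrob⟩
    obtain ⟨A, hA, hCA⟩ := exists_transpose_mul_self_eq_one_mul_mul_transpose_eq C hrank hrq
    refine ⟨C * A, A, ?_, hA, hCA.symm⟩
    rwa [← frob_mul_transpose_of_transpose_mul_self_eq_one (C * A) hA, hCA]

lemma frob_mul_transpose_sub_le {s q r : ℕ} {D1 D2 : Matrix (Fin s) (Fin r) ℝ}
    {A1 A2 : Matrix (Fin q) (Fin r) ℝ} (hD1 : frob D1 ≤ 1) (hA1 : A1ᵀ * A1 = 1)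
    (hA2 : A2ᵀ * A2 = 1) :
    frob (D1 * A1ᵀ - D2 * A2ᵀ) ≤ opN (A1 * A1ᵀ - A2 * A2ᵀ) + frob (D1 * A1ᵀ * A2 - D2) := by
  have hsplit : D1 * A1ᵀ - D2 * A2ᵀ =
      D1 * A1ᵀ * (A1 * A1ᵀ - A2 * A2ᵀ) + (D1 * A1ᵀ * A2 - D2) * A2ᵀ := by
    have hproj : D1 * A1ᵀ * (A1 * A1ᵀ) = D1 * A1ᵀ := by
      rw [Matrix.mul_assoc D1, ← Matrix.mul_assoc A1ᵀ, hA1, Matrix.one_mul]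
    rw [Matrix.mul_sub, hproj, Matrix.sub_mul, Matrix.mul_assoc (D1 * A1ᵀ)]
    abel
  rw [hsplit]
  calc _ ≤ frob (D1 * A1ᵀ * (A1 * A1ᵀ - A2 * A2ᵀ)) + frob ((D1 * A1ᵀ * A2 - D2) * A2ᵀ) :=
        frob_add_le _ _
    _ ≤ frob (D1 * A1ᵀ) * opN (A1 * A1ᵀ - A2 * A2ᵀ) + frob ((D1 * A1ᵀ * A2 - D2) * A2ᵀ) := by
        gcongr
        exact frob_mul_le _ _
    _ = frob D1 * opN (A1 * A1ᵀ - A2 * A2ᵀ) + frob (D1 * A1ᵀ * A2 - D2) := by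
        rw [frob_mul_transpose_of_transpose_mul_self_eq_one D1 hA1,
          frob_mul_transpose_of_transpose_mul_self_eq_one _ hA2]
    _ ≤ opN (A1 * A1ᵀ - A2 * A2ᵀ) + frob (D1 * A1ᵀ * A2 - D2) := by
        gcongr
        exact mul_le_of_le_one_left (opN_nonneg _) hD1

lemma frob_mul_mul_sub_le {s q r : ℕ} (D1 D2 : Matrix (Fin s) (Fin r) ℝ)
    (P : Matrix (Fin r) (Fin q) ℝ) (Q : Matrix (Fin q) (Fin r) ℝ) :
    frob (D1 * P * Q - D2) ≤ frob (D1 - D2) + frob D1 * opN (P * Q - 1) := by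
  have hsplit : D1 * P * Q - D2 = (D1 - D2) + D1 * (P * Q - 1) := by
    rw [Matrix.mul_sub, Matrix.mul_one, Matrix.mul_assoc]
    abel
  rw [hsplit]
  exact (frob_add_le _ _).trans (by gcongr; exact frob_mul_le _ _)

theorem stmt16_general {s q r : ℕ} (hrq : r ≤ q) :
    ({C : Matrix (Fin s) (Fin q) ℝ |
        ∃ (D : Matrix (Fin s) (Fin r) ℝ) (A : Matrix (Fin q) (Fin r) ℝ),
          frob D ≤ 1 ∧ Aᵀ * A = 1 ∧ C = D * Aᵀ} =
      {C : Matrix (Fin s) (Fin q) ℝ | C.rank ≤ r ∧ frob C ≤ 1}) ∧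
    ∀ (D1 D2 : Matrix (Fin s) (Fin r) ℝ) (A1 A2 : Matrix (Fin q) (Fin r) ℝ),
      frob D1 ≤ 1 → frob D2 ≤ 1 → A1ᵀ * A1 = 1 → A2ᵀ * A2 = 1 →
      frob (D1 * A1ᵀ - D2 * A2ᵀ) ≤
          opN (A1 * A1ᵀ - A2 * A2ᵀ) + frob (D1 * A1ᵀ * A2 - D2) ∧
      opN (A1 * A1ᵀ - A2 * A2ᵀ) + frob (D1 * A1ᵀ * A2 - D2) ≤
          opN (A1 * A1ᵀ - A2 * A2ᵀ) + frob (D1 - D2) +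
            frob D1 * opN (A1ᵀ * A2 - 1) := by
  refine ⟨setOf_mul_transpose_eq_setOf_rank_le hrq, fun D1 D2 A1 A2 hD1 _ hA1 hA2 => ⟨?_, ?_⟩⟩
  · exact frob_mul_transpose_sub_le hD1 hA1 hA2
  · rw [add_assoc]
    gcongr
    exact frob_mul_mul_sub_le D1 D2 A1ᵀ A2

theorem stmt16 {s q r : ℕ} (hrs : r ≤ s) (hrq : r ≤ q) :
    ({C : Matrix (Fin s) (Fin q) ℝ |
        ∃ (D : Matrix (Fin s) (Fin r) ℝ) (A : Matrix (Fin q) (Fin r) ℝ),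
          frob D ≤ 1 ∧ Aᵀ * A = 1 ∧ C = D * Aᵀ} =
      {C : Matrix (Fin s) (Fin q) ℝ | C.rank ≤ r ∧ frob C ≤ 1}) ∧
    ∀ (D1 D2 : Matrix (Fin s) (Fin r) ℝ) (A1 A2 : Matrix (Fin q) (Fin r) ℝ),
      frob D1 ≤ 1 → frob D2 ≤ 1 → A1ᵀ * A1 = 1 → A2ᵀ * A2 = 1 →
      frob (D1 * A1ᵀ - D2 * A2ᵀ) ≤
          opN (A1 * A1ᵀ - A2 * A2ᵀ) + frob (D1 * A1ᵀ * A2 - D2) ∧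
      opN (A1 * A1ᵀ - A2 * A2ᵀ) + frob (D1 * A1ᵀ * A2 - D2) ≤
          opN (A1 * A1ᵀ - A2 * A2ᵀ) + frob (D1 - D2) +
            frob D1 * opN (A1ᵀ * A2 - 1) :=
  stmt16_general hrq
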